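/- Let L ⊆ E(Ω_k) be regular. Then the set {∂_i p : p ∈ L, 1 ≤ i ≤ |p|} is regular, the set {p ∈ E(Ω_k) : ∂_i p ∈ L for some i} is regular, and the set {p ∈ E(Ω_k) : ∂_i p ∈ L for all i} is regular. -/

import Mathlib

/-- Pattern involvement: `π ⪯ σ` iff `σ` has a subsequence order-isomorphic to `π`. -/
def Involves {m n : ℕ} (π : Equiv.Perm (Fin m)) (σ : Equiv.Perm (Fin n)) : Prop :=
  ∃ e : Fin m ↪o Fin n, ∀ a b : Fin m, π a < π b ↔ σ (e a) < σ (e b)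

/-- Rank encoding: `rankEnc π i = |{j ≥ i : π j ≤ π i}|`. -/
def rankEnc {n : ℕ} (π : Equiv.Perm (Fin n)) (i : Fin n) : ℕ :=
  (Finset.univ.filter fun j : Fin n => i ≤ j ∧ π j ≤ π i).card

/-- `IsDeletion π i π'` : `π'` is the permutation obtained from `π` by deleting the
entry in position `i` and relabelling order-isomorphically; `e` enumerates the
remaining positions in order. -/
def IsDeletion {n : ℕ} (π : Equiv.Perm (Fin (n + 1))) (i : Fin (n + 1))
    (π' : Equiv.Perm (Fin n)) : Prop :=
  ∃ e : Fin n ↪o Fin (n + 1), (∀ j, e j ≠ i) ∧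
    ∀ a b : Fin n, π' a < π' b ↔ π (e a) < π (e b)

/-- The language of rank encodings of permutations in `Ω_k`. -/
def EOmega (k : ℕ) : Language ℕ :=
  {w | ∃ (n : ℕ) (π : Equiv.Perm (Fin n)),
    (∀ i, rankEnc π i ≤ k) ∧ w = List.ofFn (rankEnc π)}

/-- The single-deletion relation on rank encodings of permutations of `Ω_k`:
`DelRel k p p'` iff `p` encodes some `π ∈ Ω_k` and `p' = ∂_i p` encodes the
permutation obtained from `π` by deleting its `i`-th entry. -/
def DelRel (k : ℕ) (p p' : List ℕ) : Prop :=
  ∃ (n : ℕ) (π : Equiv.Perm (Fin (n + 1))) (i : Fin (n + 1)) (π' : Equiv.Perm (Fin n)),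
    (∀ j, rankEnc π j ≤ k) ∧ IsDeletion π i π' ∧
    p = List.ofFn (rankEnc π) ∧ p' = List.ofFn (rankEnc π')



namespace S14

/-- Reversal of a language. -/
def Rv (S : Language ℕ) : Language ℕ := {w | w.reverse ∈ S}

@[simp] theorem mem_Rv {S : Language ℕ} {w : List ℕ} : w ∈ Rv S ↔ w.reverse ∈ S := Iff.rfl

theorem Rv_Rv (S : Language ℕ) : Rv (Rv S) = S := by
  ext w; simp

/-- letter `a` is allowed at reversed position `t`. -/
def okL (k t a : ℕ) : Prop := 1 ≤ a ∧ a ≤ k ∧ a ≤ t + 1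

/-- Valid reversed rank-encodings. -/
def WrOk (k : ℕ) (P : List ℕ) : Prop := ∀ t (h : t < P.length), okL k t (P[t]'h)

theorem wrOk_nil (k : ℕ) : WrOk k [] := by intro t h; simp at h

theorem wrOk_append_singleton {k : ℕ} {P : List ℕ} {x : ℕ} :
    WrOk k (P ++ [x]) ↔ WrOk k P ∧ okL k P.length x := by
  constructor
  · intro h
    refine ⟨fun t ht => ?_, ?_⟩
    · have := h t (by simp; omega)
      rwa [List.getElem_append_left ht] at this
    · have := h P.length (by simp)
      rw [List.getElem_append_right (le_refl _)] at this
      simpa using this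
  · rintro ⟨h1, h2⟩ t ht
    rcases lt_or_ge t P.length with h | h
    · rw [List.getElem_append_left h]; exact h1 t h
    · have ht' : t = P.length := by simp at ht; omega
      subst ht'
      rw [List.getElem_append_right (le_refl _)]
      simpa using h2

theorem wrOk_letter_le {k : ℕ} {P : List ℕ} (h : WrOk k P) {x : ℕ} (hx : x ∈ P) : x ≤ k := by
  obtain ⟨t, ht, rfl⟩ := List.mem_iff_getElem.mp hx
  exact (h t ht).2.1

/-- Uncapped deletion transform on a reversed prefix. -/
def delRev : ℕ → List ℕ → List ℕ
  | _, [] => []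
  | r, a :: t => if r < a then (a - 1) :: delRev r t else a :: delRev (r + 1) t

/-- Capped transducer: output letter. -/
def outR (r a : ℕ) : ℕ := if r < a then a - 1 else a

/-- Capped transducer: state update. -/
def stepR (k r a : ℕ) : ℕ := if r < a then r else min (r + 1) (k + 1)

/-- Capped transducer: state after reading a word. -/
def TDs (k : ℕ) (r : ℕ) (B : List ℕ) : ℕ := B.foldl (stepR k) r

/-- Capped transducer: output word. -/
def TD (k : ℕ) : ℕ → List ℕ → List ℕ
  | _, [] => []
  | r, a :: B => outR r a :: TD k (stepR k r a) B

@[simp] theorem TDs_nil (k r : ℕ) : TDs k r [] = r := rfl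

theorem TDs_append_singleton (k r : ℕ) (B : List ℕ) (a : ℕ) :
    TDs k r (B ++ [a]) = stepR k (TDs k r B) a := by
  simp [TDs]

@[simp] theorem TD_nil (k r : ℕ) : TD k r [] = [] := rfl

theorem TD_append_singleton (k r : ℕ) (B : List ℕ) (a : ℕ) :
    TD k r (B ++ [a]) = TD k r B ++ [outR (TDs k r B) a] := by
  induction B generalizing r with
  | nil => simp [TD, TDs]
  | cons b B ih =>
      show outR r b :: TD k (stepR k r b) (B ++ [a]) = (outR r b :: TD k (stepR k r b) B) ++ _
      rw [ih, List.cons_append]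
      rfl

theorem TDs_le (k : ℕ) {r : ℕ} (hr : r ≤ k + 1) (B : List ℕ) : TDs k r B ≤ k + 1 := by
  induction B generalizing r with
  | nil => simpa [TDs]
  | cons b B ih =>
      have : TDs k r (b :: B) = TDs k (stepR k r b) B := rfl
      rw [this]
      exact ih (by unfold stepR; split <;> omega)

/-- On words with letters `≤ k`, the capped transducer computes `delRev`. -/
theorem TD_eq_delRev (k : ℕ) (B : List ℕ) (hB : ∀ x ∈ B, x ≤ k) (r : ℕ) :
    TD k (min r (k + 1)) B = delRev r B := by
  induction B generalizing r with
  | nil => simp [TD, delRev]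
  | cons a B ih =>
      have ha : a ≤ k := hB a (by simp)
      have hB' : ∀ x ∈ B, x ≤ k := fun x hx => hB x (by simp [hx])
      rcases lt_or_ge r a with h | h
      · have h1 : min r (k + 1) < a := by omega
        simp only [TD, delRev, outR, stepR, if_pos h1, if_pos h]
        exact congrArg _ (ih hB' r)
      · have h1 : ¬ min r (k + 1) < a := by omega
        simp only [TD, delRev, outR, stepR, if_neg h1, if_neg (by omega : ¬ r < a)]
        refine congrArg _ ?_
        have : min (min r (k+1) + 1) (k+1) = min (r+1) (k+1) := by omega
        rw [this]; exact ih hB' (r+1)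

theorem TD_length (k r : ℕ) (B : List ℕ) : (TD k r B).length = B.length := by
  induction B generalizing r with
  | nil => rfl
  | cons a B ih => simp [TD, ih]

end S14

namespace S14x
open S14

section Automata

variable {α : Type} {σ σ' : Type}

/-- Complement DFA. -/
def complDFA (M : DFA α σ) : DFA α σ := ⟨M.step, M.start, M.acceptᶜ⟩

theorem complDFA_accepts (M : DFA α σ) : (complDFA M).accepts = (M.accepts)ᶜ := by
  ext x
  simp [DFA.mem_accepts, complDFA, DFA.eval, DFA.evalFrom]
  rfl

/-- Product DFA. -/
def interDFA (M : DFA α σ) (N : DFA α σ') : DFA α (σ × σ') :=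
  ⟨fun p a => (M.step p.1 a, N.step p.2 a), (M.start, N.start),
    {p | p.1 ∈ M.accept ∧ p.2 ∈ N.accept}⟩

theorem interDFA_evalFrom (M : DFA α σ) (N : DFA α σ') (s : σ) (t : σ') (x : List α) :
    (interDFA M N).evalFrom (s, t) x = (M.evalFrom s x, N.evalFrom t x) := by
  induction x generalizing s t with
  | nil => rfl
  | cons a x ih => exact ih (M.step s a) (N.step t a)

theorem interDFA_accepts (M : DFA α σ) (N : DFA α σ') :
    (interDFA M N).accepts = {x | x ∈ M.accepts ∧ x ∈ N.accepts} := by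
  ext x
  rw [DFA.mem_accepts]
  show _ ∈ (interDFA M N).accept ↔ _
  rw [show (interDFA M N).eval x = ((interDFA M N).evalFrom (M.start, N.start) x) from rfl,
    interDFA_evalFrom]
  simp [interDFA, DFA.mem_accepts]
  rfl

/-- Reverse NFA of a DFA. -/
def revNFA (M : DFA α σ) : NFA α σ :=
  ⟨fun s a => {t | M.step t a = s}, M.accept, {M.start}⟩

theorem revNFA_evalFrom (M : DFA α σ) (S : Set σ) (x : List α) :
    (revNFA M).evalFrom S x = {t | M.evalFrom t x.reverse ∈ S} := by
  induction x using List.reverseRecOn with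
  | nil => simp [NFA.evalFrom]
  | append_singleton y a ih =>
      rw [NFA.evalFrom_append, NFA.evalFrom_singleton, ih]
      ext t
      simp only [NFA.mem_stepSet, revNFA, Set.mem_setOf_eq, List.reverse_append,
        List.reverse_singleton, List.singleton_append]
      constructor
      · rintro ⟨u, hu, rfl⟩; exact hu
      · intro hu; exact ⟨M.step t a, hu, rfl⟩

theorem revNFA_accepts (M : DFA α σ) : (revNFA M).accepts = {x | x.reverse ∈ M.accepts} := by
  ext x
  simp only [NFA.accepts, NFA.eval, revNFA_evalFrom]
  constructor
  · rintro ⟨S, hS, hS'⟩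
    simp [revNFA] at hS
    subst hS
    exact hS'
  · intro hx
    exact ⟨M.start, rfl, hx⟩

/-- An NFA with finitely many states accepts a regular language. -/
theorem nfa_regular (N : NFA α σ) [Finite σ] : N.accepts.IsRegular := by
  classical
  have : Fintype σ := Fintype.ofFinite σ
  exact ⟨Set σ, inferInstance, N.toDFA, N.toDFA_correct⟩

theorem isRegular_compl {L : Language α} (h : L.IsRegular) : (Lᶜ : Language α).IsRegular := by
  obtain ⟨σ, _, M, rfl⟩ := h
  exact ⟨σ, ‹_›, complDFA M, complDFA_accepts M⟩

theorem isRegular_inter {L L' : Language α} (h : L.IsRegular) (h' : L'.IsRegular) :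
    Language.IsRegular {x | x ∈ L ∧ x ∈ L'} := by
  obtain ⟨σ, _, M, rfl⟩ := h
  obtain ⟨σ', _, M', rfl⟩ := h'
  exact ⟨σ × σ', inferInstance, interDFA M M', interDFA_accepts M M'⟩

end Automata

theorem isRegular_Rv {L : Language ℕ} (h : L.IsRegular) : (Rv L).IsRegular := by
  obtain ⟨σ, _, M, rfl⟩ := h
  have : (revNFA M).accepts = Rv M.accepts := by
    rw [revNFA_accepts]; rfl
  rw [← this]
  exact nfa_regular _

theorem isRegular_of_Rv {L : Language ℕ} (h : (Rv L).IsRegular) : L.IsRegular := by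
  have := isRegular_Rv h
  rwa [Rv_Rv] at this

/-- DFA for the language of valid reversed encodings. -/
def wrDFA (k : ℕ) : DFA ℕ (Option (Fin (k + 1))) :=
  ⟨fun s a => match s with
    | none => none
    | some c => if 1 ≤ a ∧ a ≤ k ∧ a ≤ c.val + 1 then some ⟨min (c.val + 1) k, by omega⟩ else none,
   some ⟨0, by omega⟩, {s | s ≠ none}⟩

theorem okL_iff_capped (k t a c : ℕ) (hc : c = min t k) :
    okL k t a ↔ (1 ≤ a ∧ a ≤ k ∧ a ≤ c + 1) := by
  unfold okL; omega

open scoped Classical in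
theorem wrDFA_eval (k : ℕ) (P : List ℕ) :
    (wrDFA k).eval P = if WrOk k P then some ⟨min P.length k, by omega⟩ else none := by
  induction P using List.reverseRecOn with
  | nil => simp [wrOk_nil, DFA.eval, wrDFA]
  | append_singleton y a ih =>
      rw [DFA.eval_append_singleton, ih]
      by_cases hy : WrOk k y
      · rw [if_pos hy]
        by_cases ha : okL k y.length a
        · rw [if_pos (wrOk_append_singleton.mpr ⟨hy, ha⟩)]
          have hcap := (okL_iff_capped k y.length a (min y.length k) rfl).mp ha
          show (wrDFA k).step (some ⟨min y.length k, by omega⟩) a = _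
          simp only [wrDFA]
          rw [if_pos hcap]
          simp only [List.length_append, List.length_singleton, Option.some.injEq, Fin.mk.injEq]
          omega
        · rw [if_neg (fun hcon => ha (wrOk_append_singleton.mp hcon).2)]
          have hcap := fun hcon => ha ((okL_iff_capped k y.length a (min y.length k) rfl).mpr hcon)
          show (wrDFA k).step (some ⟨min y.length k, by omega⟩) a = _
          simp only [wrDFA]
          rw [if_neg hcap]
      · rw [if_neg hy, if_neg (fun hcon => hy (wrOk_append_singleton.mp hcon).1)]
        rfl

theorem wrDFA_accepts (k : ℕ) : (wrDFA k).accepts = {P | WrOk k P} := by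
  ext P
  rw [DFA.mem_accepts, wrDFA_eval]
  by_cases h : WrOk k P <;> simp [h, wrDFA] <;> exact h

end S14x

namespace S14c
open S14 S14x

variable {σ : Type} (k : ℕ) (M : DFA ℕ σ)

def capN (k a : ℕ) : ℕ := min a (k + 1)

def capF (k a : ℕ) : Fin (k + 2) := ⟨capN k a, by unfold capN; omega⟩

theorem stepR_le {k r : ℕ} (hr : r ≤ k + 1) (a : ℕ) : stepR k r a ≤ k + 1 := by
  unfold stepR; split <;> omega

def stepF (k : ℕ) (r : Fin (k + 2)) (b : ℕ) : Fin (k + 2) :=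
  ⟨stepR k r.val b, Nat.lt_succ_of_le (stepR_le (Nat.lt_succ_iff.mp r.isLt) b)⟩

/-- NFA reading `P`, guessing a decomposition `P = A ++ a :: B` and running `M`
on `A ++ TD k (capN k a) B`. -/
def nfa2 : NFA ℕ (σ ⊕ (Fin (k + 2) × σ)) where
  step := fun x b => match x with
    | .inl s => {.inl (M.step s b), .inr (capF k b, s)}
    | .inr (r, s) => {.inr (stepF k r b, M.step s (outR r.val b))}
  start := {.inl M.start}
  accept := {x | ∃ r s, x = .inr (r, s) ∧ s ∈ M.accept}

theorem concat_eq_append_cons {P : List ℕ} {b : ℕ} {A : List ℕ} {a : ℕ} {B : List ℕ} :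
    P ++ [b] = A ++ a :: B ↔
      (A = P ∧ a = b ∧ B = []) ∨ ∃ B', B = B' ++ [b] ∧ P = A ++ a :: B' := by
  constructor
  · intro h
    induction B using List.reverseRecOn with
    | nil =>
        have : P ++ [b] = A ++ [a] := by simpa using h
        obtain ⟨h1, h2⟩ := List.append_inj' this rfl
        exact Or.inl ⟨h1.symm, (by simpa using h2.symm), rfl⟩
    | append_singleton B' b' _ =>
        have : P ++ [b] = (A ++ a :: B') ++ [b'] := by simpa using h
        obtain ⟨h1, h2⟩ := List.append_inj' this rfl
        have hb : b = b' := by simpa using h2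
        exact Or.inr ⟨B', by rw [hb], h1⟩
  · rintro (⟨rfl, rfl, rfl⟩ | ⟨B', rfl, rfl⟩) <;> simp

theorem nfa2_eval (P : List ℕ) :
    (∀ s, .inl s ∈ (nfa2 k M).eval P ↔ s = M.eval P) ∧
    (∀ (r : Fin (k + 2)) (s : σ), .inr (r, s) ∈ (nfa2 k M).eval P ↔
      ∃ A a B, P = A ++ a :: B ∧ r.val = TDs k (capN k a) B ∧
        s = M.eval (A ++ TD k (capN k a) B)) := by
  induction P using List.reverseRecOn with
  | nil =>
      constructor
      · intro s
        show _ ∈ ({Sum.inl M.start} : Set (σ ⊕ (Fin (k + 2) × σ))) ↔ _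
        simp [NFA.eval, NFA.evalFrom, eq_comm]
      · intro r s
        show _ ∈ ({Sum.inl M.start} : Set (σ ⊕ (Fin (k + 2) × σ))) ↔ _
        simp only [Set.mem_singleton_iff]
        constructor
        · intro h; exact absurd h (by simp)
        · rintro ⟨A, a, B, hsplit, -, -⟩
          exact absurd hsplit (by simp)
  | append_singleton P b ih =>
      rw [NFA.eval_append_singleton]
      obtain ⟨ihl, ihr⟩ := ih
      constructor
      · intro s
        simp only [NFA.mem_stepSet]
        constructor
        · rintro ⟨t, ht, hstep⟩
          match t with
          | .inl t0 =>
              simp only [nfa2, Set.mem_insert_iff, Set.mem_singleton_iff] at hstep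
              rcases hstep with h | h
              · obtain rfl : s = M.step t0 b := by simpa using h
                rw [(ihl t0).mp ht, ← DFA.eval_append_singleton]
              · exact absurd h (by simp)
          | .inr (r0, t0) =>
              simp only [nfa2, Set.mem_singleton_iff] at hstep
              exact absurd hstep (by simp)
        · rintro rfl
          exact ⟨.inl (M.eval P), (ihl _).mpr rfl, by simp [nfa2, DFA.eval_append_singleton]⟩
      · intro r s
        simp only [NFA.mem_stepSet]
        constructor
        · rintro ⟨t, ht, hstep⟩
          match t with
          | .inl t0 =>
              simp only [nfa2, Set.mem_insert_iff, Set.mem_singleton_iff] at hstep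
              rcases hstep with h | h
              · exact absurd h (by simp)
              · obtain ⟨hr, hs⟩ : r = capF k b ∧ s = t0 := by
                  constructor <;> [exact (by simpa using congrArg (fun x => match x with
                    | .inr (r, _) => r | .inl _ => r) h);
                    exact (by simpa using congrArg (fun x => match x with
                    | .inr (_, s) => s | .inl u => u) h)]
                refine ⟨P, b, [], rfl, by simp [hr, capF], ?_⟩
                simp [hs, (ihl t0).mp ht]
          | .inr (r0, t0) =>
              simp only [nfa2, Set.mem_singleton_iff] at hstep
              obtain ⟨hr, hs⟩ : r = stepF k r0 b ∧
                  s = M.step t0 (outR r0.val b) := by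
                constructor <;> [exact (by simpa using congrArg (fun x => match x with
                  | .inr (r, _) => r | .inl _ => r) hstep);
                  exact (by simpa using congrArg (fun x => match x with
                  | .inr (_, s) => s | .inl u => u) hstep)]
              obtain ⟨A, a, B, rfl, hr0, hs0⟩ := (ihr r0 t0).mp ht
              refine ⟨A, a, B ++ [b], by simp, ?_, ?_⟩
              · rw [TDs_append_singleton, ← hr0, hr]; rfl
              · rw [TD_append_singleton, ← hr0, hs, hs0, ← List.append_assoc,
                  DFA.eval_append_singleton]
        · rintro ⟨A, a, B, hsplit, hr, hs⟩
          rcases concat_eq_append_cons.mp hsplit with ⟨rfl, rfl, rfl⟩ | ⟨B', rfl, rfl⟩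
          · refine ⟨.inl (M.eval A), (ihl _).mpr rfl, ?_⟩
            simp only [nfa2, Set.mem_insert_iff, Set.mem_singleton_iff]
            right
            simp only [TDs_nil] at hr
            simp only [TD_nil, List.append_nil] at hs
            rw [hs]
            congr 1
            exact congrArg₂ _ (Fin.ext hr) rfl
          · refine ⟨.inr (⟨TDs k (capN k a) B', Nat.lt_succ_of_le (TDs_le k (by unfold capN; omega) B')⟩,
              M.eval (A ++ TD k (capN k a) B')), (ihr _ _).mpr ⟨A, a, B', rfl, rfl, rfl⟩, ?_⟩
            simp only [nfa2, Set.mem_singleton_iff]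
            congr 1
            refine congrArg₂ _ (Fin.ext ?_) ?_
            · rw [hr, TDs_append_singleton]; rfl
            · rw [hs, TD_append_singleton, ← List.append_assoc, DFA.eval_append_singleton]

theorem nfa2_accepts :
    (nfa2 k M).accepts = {P | ∃ A a B, P = A ++ a :: B ∧ A ++ TD k (capN k a) B ∈ M.accepts} := by
  ext P
  simp only [NFA.accepts, NFA.eval, Set.mem_setOf_eq]
  constructor
  · rintro ⟨x, hx, hev⟩
    obtain ⟨r, s, rfl, hacc⟩ := hx
    obtain ⟨A, a, B, hsplit, -, hs⟩ := ((nfa2_eval k M P).2 r s).mp hev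
    exact ⟨A, a, B, hsplit, by rw [DFA.mem_accepts, ← hs]; exact hacc⟩
  · rintro ⟨A, a, B, rfl, hacc⟩
    refine ⟨.inr (⟨TDs k (capN k a) B, Nat.lt_succ_of_le (TDs_le k (by unfold capN; omega) B)⟩,
      M.eval (A ++ TD k (capN k a) B)), ⟨_, _, rfl, hacc⟩, ?_⟩
    exact ((nfa2_eval k M _).2 _ _).mpr ⟨A, a, B, rfl, rfl, rfl⟩

end S14c

namespace S14d
open S14 S14x S14c

variable {σ : Type} (k : ℕ) (M : DFA ℕ σ)

/-- NFA reading `Q`, guessing `A`, an inserted letter `a` and a suffix `B` with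
`Q = A ++ TD k (capN k a) B`, and running `M` on `A ++ a :: B`. -/
def nfa1 : NFA ℕ (σ ⊕ (Fin (k + 2) × σ)) where
  step := fun x b => match x with
    | .inl s => {x | x = .inl (M.step s b) ∨
        ∃ a a', outR (capN k a) a' = b ∧
          x = .inr (stepF k (capF k a) a', M.step (M.step s a) a')}
    | .inr (r, s) => {x | ∃ a', outR r.val a' = b ∧ x = .inr (stepF k r a', M.step s a')}
  start := {x | x = .inl M.start ∨ ∃ a, x = .inr (capF k a, M.step M.start a)}
  accept := {x | (∃ r s, x = .inr (r, s) ∧ s ∈ M.accept) ∨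
      (∃ s a, x = .inl s ∧ M.step s a ∈ M.accept)}

theorem nfa1_eval (Q : List ℕ) :
    (∀ s, .inl s ∈ (nfa1 k M).eval Q ↔ s = M.eval Q) ∧
    (∀ (r : Fin (k + 2)) (s : σ), .inr (r, s) ∈ (nfa1 k M).eval Q ↔
      ∃ A a B, (B = [] → A = []) ∧ Q = A ++ TD k (capN k a) B ∧
        r.val = TDs k (capN k a) B ∧ s = M.eval (A ++ a :: B)) := by
  induction Q using List.reverseRecOn with
  | nil =>
      constructor
      · intro s
        show _ ∈ (nfa1 k M).start ↔ _
        simp [nfa1, eq_comm]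
      · intro r s
        show _ ∈ (nfa1 k M).start ↔ _
        simp only [nfa1, Set.mem_setOf_eq]
        constructor
        · rintro (h | ⟨a, h⟩)
          · exact absurd h (by simp)
          · obtain ⟨rfl, rfl⟩ : r = capF k a ∧ s = M.step M.start a := by
              simpa [Prod.ext_iff] using h
            exact ⟨[], a, [], fun _ => rfl, rfl, rfl, rfl⟩
        · rintro ⟨A, a, B, hBA, hQ, hr, hs⟩
          have hA : A = [] := by
            rcases List.append_eq_nil_iff.mp hQ.symm with ⟨h1, -⟩; exact h1
          have hB : B = [] := by
            rcases List.append_eq_nil_iff.mp hQ.symm with ⟨-, h2⟩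
            have := TD_length k (capN k a) B
            rw [h2] at this
            exact List.length_eq_zero_iff.mp this.symm
          subst hA; subst hB
          right
          refine ⟨a, ?_⟩
          have hrr : r = capF k a := Fin.ext (by simpa [capF] using hr)
          have hss : s = M.step M.start a := by simpa using hs
          rw [hrr, hss]
  | append_singleton Q b ih =>
      rw [NFA.eval_append_singleton]
      obtain ⟨ihl, ihr⟩ := ih
      constructor
      · intro s
        simp only [NFA.mem_stepSet]
        constructor
        · rintro ⟨t, ht, hstep⟩
          match t with
          | .inl t0 =>
              simp only [nfa1, Set.mem_setOf_eq] at hstep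
              rcases hstep with h | ⟨a, a', -, h⟩
              · obtain rfl : s = M.step t0 b := by simpa using h
                rw [(ihl t0).mp ht, ← DFA.eval_append_singleton]
              · exact absurd h (by simp)
          | .inr (r0, t0) =>
              simp only [nfa1, Set.mem_setOf_eq] at hstep
              obtain ⟨a', -, h⟩ := hstep
              exact absurd h (by simp)
        · rintro rfl
          refine ⟨.inl (M.eval Q), (ihl _).mpr rfl, ?_⟩
          simp [nfa1, DFA.eval_append_singleton]
      · intro r s
        simp only [NFA.mem_stepSet]
        constructor
        · rintro ⟨t, ht, hstep⟩
          match t with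
          | .inl t0 =>
              simp only [nfa1, Set.mem_setOf_eq] at hstep
              rcases hstep with h | ⟨a, a', hout, h⟩
              · exact absurd h (by simp)
              · obtain ⟨rfl, rfl⟩ : r = stepF k (capF k a) a' ∧
                    s = M.step (M.step t0 a) a' := by
                  simpa [Prod.ext_iff] using h
                refine ⟨Q, a, [a'], by simp, ?_, ?_, ?_⟩
                · have : TD k (capN k a) [a'] = [b] := by
                    simp [TD, hout]
                  rw [this]
                · show stepR k (capF k a).val a' = TDs k (capN k a) [a']
                  rfl
                · rw [(ihl t0).mp ht,
                    show Q ++ a :: [a'] = (Q ++ [a]) ++ [a'] by simp,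
                    DFA.eval_append_singleton, DFA.eval_append_singleton]
          | .inr (r0, t0) =>
              simp only [nfa1, Set.mem_setOf_eq] at hstep
              obtain ⟨a', hout, h⟩ := hstep
              obtain ⟨rfl, rfl⟩ : r = stepF k r0 a' ∧ s = M.step t0 a' := by
                simpa [Prod.ext_iff] using h
              obtain ⟨A, a, B, hBA, rfl, hr0, hs0⟩ := (ihr r0 t0).mp ht
              refine ⟨A, a, B ++ [a'], by simp, ?_, ?_, ?_⟩
              · rw [TD_append_singleton, ← hr0, hout, List.append_assoc]
              · show stepR k r0.val a' = _
                rw [TDs_append_singleton, ← hr0]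
              · rw [hs0, show A ++ a :: (B ++ [a']) = (A ++ a :: B) ++ [a'] by simp,
                  DFA.eval_append_singleton]
        · rintro ⟨A, a, B, hBA, hQ, hr, hs⟩
          rcases List.eq_nil_or_concat B with rfl | ⟨B', a', rfl⟩
          · exact absurd (hBA rfl ▸ hQ) (by simp)
          · simp only [List.concat_eq_append] at hBA hQ hr hs
            rw [TD_append_singleton, ← List.append_assoc] at hQ
            obtain ⟨hQ1, hb⟩ := List.append_inj' hQ rfl
            have hb' : b = outR (TDs k (capN k a) B') a' := by simpa using hb
            rcases List.eq_nil_or_concat B' with rfl | hB'ne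
            · -- predecessor is a phase-1 state
              refine ⟨.inl (M.eval Q), (ihl _).mpr rfl, ?_⟩
              simp only [nfa1, Set.mem_setOf_eq]
              right
              refine ⟨a, a', by simpa using hb'.symm, ?_⟩
              have hQA : Q = A := by simpa using hQ1
              congr 1
              refine congrArg₂ _ (Fin.ext ?_) ?_
              · rw [hr]; rfl
              · rw [hs, hQA]
                simp only [List.nil_append]
                rw [show A ++ a :: [a'] = (A ++ [a]) ++ [a'] by simp,
                  DFA.eval_append_singleton, DFA.eval_append_singleton]
            · -- predecessor is a phase-2 state
              have hB'A : B' = [] → A = [] := by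
                intro h; exact absurd (h ▸ hB'ne) (by rintro ⟨L, c, hc⟩; simp at hc)
              refine ⟨.inr (⟨TDs k (capN k a) B',
                  Nat.lt_succ_of_le (TDs_le k (by unfold capN; omega) B')⟩,
                  M.eval (A ++ a :: B')),
                (ihr _ _).mpr ⟨A, a, B', hB'A, hQ1, rfl, rfl⟩, ?_⟩
              simp only [nfa1, Set.mem_setOf_eq]
              refine ⟨a', hb'.symm, ?_⟩
              congr 1
              refine congrArg₂ _ (Fin.ext ?_) ?_
              · rw [hr, TDs_append_singleton]; rfl
              · rw [hs, show A ++ a :: (B' ++ [a']) = (A ++ a :: B') ++ [a'] by simp,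
                  DFA.eval_append_singleton]

theorem nfa1_accepts :
    (nfa1 k M).accepts =
      {Q | ∃ A a B, Q = A ++ TD k (capN k a) B ∧ A ++ a :: B ∈ M.accepts} := by
  ext Q
  simp only [NFA.accepts, NFA.eval, Set.mem_setOf_eq]
  constructor
  · rintro ⟨x, hx, hev⟩
    rcases hx with ⟨r, s, rfl, hacc⟩ | ⟨s, a, rfl, hacc⟩
    · obtain ⟨A, a, B, -, hQ, -, hs⟩ := ((nfa1_eval k M Q).2 r s).mp hev
      exact ⟨A, a, B, hQ, by rw [DFA.mem_accepts, ← hs]; exact hacc⟩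
    · have hsQ := ((nfa1_eval k M Q).1 s).mp hev
      refine ⟨Q, a, [], by simp, ?_⟩
      rw [DFA.mem_accepts, show Q ++ a :: [] = Q ++ [a] by simp, DFA.eval_append_singleton, ← hsQ]
      exact hacc
  · rintro ⟨A, a, B, rfl, hacc⟩
    rcases List.eq_nil_or_concat B with rfl | hBne
    · refine ⟨.inl (M.eval (A ++ TD k (capN k a) [])), Or.inr ⟨_, a, rfl, ?_⟩,
        ((nfa1_eval k M _).1 _).mpr rfl⟩
      rw [← DFA.eval_append_singleton]
      simp only [TD_nil, List.append_nil]
      rw [DFA.mem_accepts] at hacc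
      rw [show A ++ [a] = A ++ a :: [] by simp]
      exact hacc
    · have hBA : B = [] → A = [] := by
        intro h; exact absurd (h ▸ hBne) (by rintro ⟨L, c, hc⟩; simp at hc)
      refine ⟨.inr (⟨TDs k (capN k a) B,
          Nat.lt_succ_of_le (TDs_le k (by unfold capN; omega) B)⟩, M.eval (A ++ a :: B)),
        Or.inl ⟨_, _, rfl, hacc⟩,
        ((nfa1_eval k M _).2 _ _).mpr ⟨A, a, B, hBA, rfl, rfl, rfl⟩⟩

end S14d


namespace S14e
open S14

theorem rankEnc_pos {n : ℕ} (π : Equiv.Perm (Fin n)) (i : Fin n) : 1 ≤ rankEnc π i :=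
  Finset.card_pos.mpr ⟨i, by simp⟩

theorem rankEnc_le_sub {n : ℕ} (π : Equiv.Perm (Fin n)) (i : Fin n) :
    rankEnc π i ≤ n - i.val := by
  have h : (Finset.univ.filter fun j : Fin n => i ≤ j ∧ π j ≤ π i) ⊆ Finset.Ici i := by
    intro j hj
    simp only [Finset.mem_filter] at hj
    exact Finset.mem_Ici.mpr hj.2.1
  calc rankEnc π i ≤ (Finset.Ici i).card := Finset.card_le_card h
  _ = n - i.val := Fin.card_Ici i

/-- Insertion of a new first entry of rank `v+1`. -/
def insF {m : ℕ} (v : Fin (m + 1)) (π : Equiv.Perm (Fin m)) : Fin (m + 1) → Fin (m + 1) :=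
  Fin.cases v (fun j => v.succAbove (π j))

theorem insF_surj {m : ℕ} (v : Fin (m + 1)) (π : Equiv.Perm (Fin m)) :
    Function.Surjective (insF v π) := by
  intro x
  rcases eq_or_ne x v with rfl | hx
  · exact ⟨0, rfl⟩
  · obtain ⟨z, hz⟩ := Fin.exists_succAbove_eq hx
    exact ⟨(π.symm z).succ, by simp [insF, hz]⟩

theorem insF_bij {m : ℕ} (v : Fin (m + 1)) (π : Equiv.Perm (Fin m)) :
    Function.Bijective (insF v π) :=
  Finite.surjective_iff_bijective.mp (insF_surj v π)

noncomputable def insPerm {m : ℕ} (v : Fin (m + 1)) (π : Equiv.Perm (Fin m)) : Equiv.Perm (Fin (m + 1)) :=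
  Equiv.ofBijective _ (insF_bij v π)

@[simp] theorem insPerm_zero {m : ℕ} (v : Fin (m + 1)) (π : Equiv.Perm (Fin m)) :
    insPerm v π 0 = v := rfl

@[simp] theorem insPerm_succ {m : ℕ} (v : Fin (m + 1)) (π : Equiv.Perm (Fin m)) (j : Fin m) :
    insPerm v π j.succ = v.succAbove (π j) := by
  show insF v π j.succ = _
  simp [insF]

theorem rankEnc_insPerm_zero {m : ℕ} (v : Fin (m + 1)) (π : Equiv.Perm (Fin m)) :
    rankEnc (insPerm v π) 0 = v.val + 1 := by
  unfold rankEnc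
  have h1 : (Finset.univ.filter fun j : Fin (m+1) => 0 ≤ j ∧ insPerm v π j ≤ insPerm v π 0)
      = Finset.univ.filter fun j => insPerm v π j ≤ v := by
    apply Finset.filter_congr
    intro j _
    simp [Fin.zero_le]
  rw [h1, ← Fin.card_Iic v]
  apply Finset.card_bij (fun j _ => insPerm v π j)
  · intro j hj
    simp only [Finset.mem_filter] at hj
    exact Finset.mem_Iic.mpr hj.2
  · intro a _ b _ hab
    exact (insPerm v π).injective hab
  · intro x hx
    refine ⟨(insPerm v π).symm x, ?_, by simp⟩
    simp only [Finset.mem_filter, Finset.mem_univ, true_and, Equiv.apply_symm_apply]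
    exact Finset.mem_Iic.mp hx

theorem rankEnc_insPerm_succ {m : ℕ} (v : Fin (m + 1)) (π : Equiv.Perm (Fin m)) (i : Fin m) :
    rankEnc (insPerm v π) i.succ = rankEnc π i := by
  unfold rankEnc
  symm
  apply Finset.card_bij (fun j _ => j.succ)
  · intro j hj
    simp only [Finset.mem_filter, Finset.mem_univ, true_and] at hj ⊢
    refine ⟨Fin.succ_le_succ_iff.mpr hj.1, ?_⟩
    simp only [insPerm_succ]
    exact (Fin.succAbove_le_succAbove_iff).mpr hj.2
  · intro a _ b _ hab
    exact Fin.succ_injective _ hab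
  · intro j hj
    simp only [Finset.mem_filter, Finset.mem_univ, true_and] at hj
    obtain ⟨h1, h2⟩ := hj
    have hj0 : j ≠ 0 := by
      intro h
      rw [h] at h1
      exact absurd h1 (by simp [Fin.lt_iff_val_lt_val, Fin.le_def])
    obtain ⟨j0, rfl⟩ := Fin.exists_succ_eq.mpr hj0
    refine ⟨j0, ?_, rfl⟩
    simp only [Finset.mem_filter, Finset.mem_univ, true_and]
    constructor
    · exact Fin.succ_le_succ_iff.mp h1
    · simp only [insPerm_succ] at h2
      exact (Fin.succAbove_le_succAbove_iff).mp h2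

theorem ofFn_rankEnc_insPerm {m : ℕ} (v : Fin (m + 1)) (π : Equiv.Perm (Fin m)) :
    List.ofFn (rankEnc (insPerm v π)) = (v.val + 1) :: List.ofFn (rankEnc π) := by
  rw [List.ofFn_succ, rankEnc_insPerm_zero]
  exact congrArg _ (congrArg List.ofFn (funext fun i => rankEnc_insPerm_succ v π i))

end S14e



namespace S14f
open S14 S14e

/-- The word-level characterisation of `EOmega`. -/
def Vk (k : ℕ) : Language ℕ :=
  {p | ∀ i (h : i < p.length), 1 ≤ p[i]'h ∧ p[i]'h ≤ k ∧ p[i]'h ≤ p.length - i}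

theorem enc_mem_Vk {k n : ℕ} (π : Equiv.Perm (Fin n)) (hb : ∀ i, rankEnc π i ≤ k) :
    List.ofFn (rankEnc π) ∈ Vk k := by
  intro i h
  have hlen : (List.ofFn (rankEnc π)).length = n := List.length_ofFn
  have hi : i < n := by rwa [hlen] at h
  have hget : (List.ofFn (rankEnc π))[i]'h = rankEnc π ⟨i, hi⟩ := by
    simp [List.getElem_ofFn]
  rw [hget, hlen]
  exact ⟨rankEnc_pos π _, hb _, rankEnc_le_sub π _⟩

theorem decode {k : ℕ} (p : List ℕ) (hp : p ∈ Vk k) :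
    ∃ (n : ℕ) (π : Equiv.Perm (Fin n)),
      (∀ i, rankEnc π i ≤ k) ∧ p = List.ofFn (rankEnc π) := by
  induction p with
  | nil =>
      refine ⟨0, 1, fun i => i.elim0, ?_⟩
      simp
  | cons a t ih =>
      have ht : t ∈ Vk k := by
        intro i h
        have := hp (i + 1) (by simpa using Nat.succ_lt_succ h)
        simpa using this
      obtain ⟨m, π, hb, rfl⟩ := ih ht
      have hlen : (List.ofFn (rankEnc π)).length = m := List.length_ofFn
      obtain ⟨ha1, hak, halen⟩ := hp 0 (by simp)
      simp only [List.getElem_cons_zero] at ha1 hak halen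
      have ham : a ≤ m + 1 := by
        simp only [List.length_cons, hlen] at halen
        omega
      refine ⟨m + 1, insPerm ⟨a - 1, by omega⟩ π, ?_, ?_⟩
      · intro i
        induction i using Fin.cases with
        | zero => rw [rankEnc_insPerm_zero]; simpa using (by omega : a - 1 + 1 ≤ k)
        | succ i0 => rw [rankEnc_insPerm_succ]; exact hb i0
      · rw [ofFn_rankEnc_insPerm]
        congr 1
        simp
        omega

theorem eOmega_eq_Vk (k : ℕ) : EOmega k = Vk k := by
  ext p
  constructor
  · rintro ⟨n, π, hb, rfl⟩
    exact enc_mem_Vk π hb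
  · intro hp
    exact decode p hp

end S14f

namespace S14g
open S14 S14e

variable {n : ℕ} (π : Equiv.Perm (Fin (n + 1))) (i : Fin (n + 1))


/-- The deletion of the entry at position `i`. -/
noncomputable def delPerm : Equiv.Perm (Fin n) :=
  (finSuccAboveEquiv i).trans
    ((Equiv.subtypeEquiv π (fun a =>
      ⟨fun h hc => h (π.injective hc), fun h hc => h (hc ▸ rfl)⟩)).trans
      (finSuccAboveEquiv (π i)).symm)

theorem coe_finSuccAboveEquiv (p : Fin (n + 1)) (j : Fin n) :
    ((finSuccAboveEquiv p j : {x // x ≠ p}) : Fin (n + 1)) = p.succAbove j := by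
  simp [finSuccAboveEquiv]

theorem finSuccAboveEquiv_symm_lt (p : Fin (n + 1)) (x y : {z : Fin (n + 1) // z ≠ p}) :
    (finSuccAboveEquiv p).symm x < (finSuccAboveEquiv p).symm y ↔ (x : Fin (n + 1)) < y := by
  have hx : p.succAbove ((finSuccAboveEquiv p).symm x) = x := by
    rw [← coe_finSuccAboveEquiv p ((finSuccAboveEquiv p).symm x), Equiv.apply_symm_apply]
  have hy : p.succAbove ((finSuccAboveEquiv p).symm y) = y := by
    rw [← coe_finSuccAboveEquiv p ((finSuccAboveEquiv p).symm y), Equiv.apply_symm_apply]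
  rw [← hx, ← hy, Fin.succAbove_lt_succAbove_iff]

theorem succAbove_delPerm (j : Fin n) :
    (π i).succAbove (delPerm π i j) = π (i.succAbove j) := by
  show (π i).succAbove ((finSuccAboveEquiv (π i)).symm _) = _
  rw [← coe_finSuccAboveEquiv (π i), Equiv.apply_symm_apply]
  simp only [Equiv.subtypeEquiv_apply]
  rw [coe_finSuccAboveEquiv]

theorem lt_delPerm (a b : Fin n) :
    delPerm π i a < delPerm π i b ↔ π (i.succAbove a) < π (i.succAbove b) := by
  rw [← Fin.succAbove_lt_succAbove_iff (p := π i), succAbove_delPerm, succAbove_delPerm]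

theorem isDeletion_delPerm : IsDeletion π i (delPerm π i) := by
  refine ⟨i.succAboveOrderEmb, fun j => Fin.succAbove_ne i j, fun a b => ?_⟩
  rw [lt_delPerm]
  rfl

/-- An order embedding `Fin n ↪o Fin (n+1)` avoiding `i` is `succAbove i`. -/
theorem orderEmb_eq_succAbove (e : Fin n ↪o Fin (n + 1)) (hne : ∀ j, e j ≠ i) (j : Fin n) :
    e j = i.succAbove j := by
  classical
  have hcard : (Finset.univ.erase i).card = n := by
    rw [Finset.card_erase_of_mem (Finset.mem_univ i)]
    simp
  have h1 : e = (Finset.univ.erase i).orderEmbOfFin hcard :=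
    Finset.orderEmbOfFin_unique' hcard (fun x => Finset.mem_erase.mpr ⟨hne x, Finset.mem_univ _⟩)
  have h2 : i.succAboveOrderEmb = (Finset.univ.erase i).orderEmbOfFin hcard :=
    Finset.orderEmbOfFin_unique' hcard
      (fun x => Finset.mem_erase.mpr ⟨Fin.succAbove_ne i x, Finset.mem_univ _⟩)
  have := congrArg (fun f : Fin n ↪o Fin (n + 1) => f j) (h1.trans h2.symm)
  exact this

/-- The ranks of any deletion of `π` at `i` are given by a formula in `π` alone. -/
theorem rank_del {π' : Equiv.Perm (Fin n)} (hdel : IsDeletion π i π') (j : Fin n) :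
    rankEnc π' j =
      (Finset.univ.filter fun l : Fin n =>
        j ≤ l ∧ π (i.succAbove l) ≤ π (i.succAbove j)).card := by
  obtain ⟨e, hne, hcomp⟩ := hdel
  have he : ∀ l, e l = i.succAbove l := orderEmb_eq_succAbove i e hne
  unfold rankEnc
  congr 1
  apply Finset.filter_congr
  intro l _
  rcases eq_or_ne l j with rfl | hlj
  · simp
  · have h1 : π' l ≤ π' j ↔ π' l < π' j := by
      constructor
      · intro h
        rcases lt_or_eq_of_le h with h | h
        · exact h
        · exact absurd (π'.injective h) hlj
      · exact le_of_lt
    have h2 : π (i.succAbove l) ≤ π (i.succAbove j) ↔ π (i.succAbove l) < π (i.succAbove j) := by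
      constructor
      · intro h
        rcases lt_or_eq_of_le h with h | h
        · exact h
        · exact absurd (Fin.succAbove_right_injective (π.injective h)) hlj
      · exact le_of_lt
    rw [h1, h2, ← he, ← he]
    exact and_congr Iff.rfl (hcomp l j)

/-- Positions to the right of the deleted entry keep their rank. -/
theorem rank_del_ge {π' : Equiv.Perm (Fin n)} (hdel : IsDeletion π i π') (j : Fin n)
    (hij : i ≤ j.castSucc) : rankEnc π' j = rankEnc π j.succ := by
  rw [rank_del π i hdel j]
  have hsj : i.succAbove j = j.succ := Fin.succAbove_of_le_castSucc i j hij
  rw [hsj]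
  unfold rankEnc
  apply Finset.card_bij (fun l _ => i.succAbove l)
  · intro l hl
    simp only [Finset.mem_filter, Finset.mem_univ, true_and] at hl ⊢
    have hsl : i.succAbove l = l.succ := Fin.succAbove_of_le_castSucc i l
      (le_trans hij (Fin.castSucc_le_castSucc_iff.mpr hl.1))
    exact ⟨by rw [hsl]; exact Fin.succ_le_succ_iff.mpr hl.1, hl.2⟩
  · intro a _ b _ hab
    exact Fin.succAbove_right_injective hab
  · intro m hm
    simp only [Finset.mem_filter, Finset.mem_univ, true_and] at hm
    have hmi : m ≠ i := by
      intro h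
      have : i < j.succ := lt_of_le_of_lt hij Fin.castSucc_lt_succ
      rw [h] at hm
      exact absurd (lt_of_lt_of_le this hm.1) (lt_irrefl _)
    obtain ⟨z, hz⟩ := Fin.exists_succAbove_eq hmi
    refine ⟨z, ?_, hz⟩
    simp only [Finset.mem_filter, Finset.mem_univ, true_and]
    constructor
    · by_contra hzj
      push_neg at hzj
      have : i.succAbove z < i.succAbove j := (Fin.succAbove_lt_succAbove_iff).mpr hzj
      rw [hz, hsj] at this
      exact absurd (lt_of_lt_of_le this hm.1) (lt_irrefl _)
    · rw [hz]; exact hm.2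
end S14g

namespace S14h
open S14 S14e S14g

theorem delRev_length (r : ℕ) (B : List ℕ) : (delRev r B).length = B.length := by
  induction B generalizing r with
  | nil => rfl
  | cons a t ih => simp only [delRev]; split <;> simp [ih]

variable {n : ℕ} (π : Equiv.Perm (Fin (n + 1))) (i : Fin (n + 1))

/-- `Rr m` counts positions `≥ m` whose value is at most `π i`. -/
def Rr (m : ℕ) : ℕ :=
  (Finset.univ.filter fun l : Fin (n + 1) => m ≤ l.val ∧ π l ≤ π i).card

theorem Rr_ival : Rr π i i.val = rankEnc π i := by
  unfold Rr rankEnc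
  congr 1

theorem Rr_succ (m : ℕ) (hm : m < n + 1) :
    Rr π i m = Rr π i (m + 1) + (if π ⟨m, hm⟩ ≤ π i then 1 else 0) := by
  classical
  set U := Finset.univ.filter fun l : Fin (n + 1) => m ≤ l.val ∧ π l ≤ π i with hU
  set U' := Finset.univ.filter fun l : Fin (n + 1) => m + 1 ≤ l.val ∧ π l ≤ π i with hU'
  have herase : U.erase ⟨m, hm⟩ = U' := by
    ext l
    simp only [hU, hU', Finset.mem_erase, Finset.mem_filter, Finset.mem_univ, true_and,
      Ne, Fin.ext_iff]
    constructor
    · rintro ⟨h1, h2, h3⟩; exact ⟨by omega, h3⟩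
    · rintro ⟨h1, h2⟩; exact ⟨by omega, by omega, h2⟩
  by_cases hmem : (⟨m, hm⟩ : Fin (n + 1)) ∈ U
  · have hcond : π ⟨m, hm⟩ ≤ π i := by
      simp only [hU, Finset.mem_filter] at hmem
      exact hmem.2.2
    have h1 : U'.card = U.card - 1 := by rw [← herase]; exact Finset.card_erase_of_mem hmem
    have h2 : 1 ≤ U.card := Finset.card_pos.mpr ⟨_, hmem⟩
    show U.card = U'.card + _
    rw [if_pos hcond]
    omega
  · have hcond : ¬ π ⟨m, hm⟩ ≤ π i := by
      intro hc
      exact hmem (by simp only [hU, Finset.mem_filter, Finset.mem_univ, true_and]; exact ⟨le_refl m, hc⟩)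
    have h1 : U' = U := by rw [← herase]; exact Finset.erase_eq_of_notMem (by simpa using hmem)
    show U.card = U'.card + _
    rw [if_neg hcond, h1]
    omega

theorem lt_iff_Rr (j : Fin n) (hj : j.castSucc < i) :
    π i < π j.castSucc ↔ Rr π i (j.val + 1) < rankEnc π j.castSucc := by
  constructor
  · intro h
    apply Finset.card_lt_card
    constructor
    · intro l hl
      simp only [Finset.mem_filter, Finset.mem_univ, true_and] at hl ⊢
      exact ⟨by rw [Fin.le_def]; simp only [Fin.coe_castSucc]; omega,
        le_of_lt (lt_of_le_of_lt hl.2 h)⟩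
    · intro hsub
      have hmem : j.castSucc ∈ Finset.univ.filter
          fun l : Fin (n+1) => j.castSucc ≤ l ∧ π l ≤ π j.castSucc := by
        simp
      have := hsub hmem
      simp only [Finset.mem_filter, Finset.mem_univ, true_and, Fin.coe_castSucc] at this
      omega
  · intro h
    by_contra hc
    have hne : π j.castSucc ≠ π i := by
      intro hcon
      exact absurd (π.injective hcon ▸ hj) (lt_irrefl _)
    have hlt : π j.castSucc < π i := lt_of_le_of_ne (not_lt.mp hc) hne
    -- T ∪ {i} ⊆ U j.val
    have hiT : i ∉ Finset.univ.filter
        (fun m : Fin (n+1) => j.castSucc ≤ m ∧ π m ≤ π j.castSucc) := by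
      simp only [Finset.mem_filter, Finset.mem_univ, true_and, not_and]
      intro _
      exact not_le.mpr hlt
    have hsub : insert i (Finset.univ.filter
        (fun m : Fin (n+1) => j.castSucc ≤ m ∧ π m ≤ π j.castSucc)) ⊆
        Finset.univ.filter (fun l : Fin (n+1) => j.val ≤ l.val ∧ π l ≤ π i) := by
      intro m hm
      rcases Finset.mem_insert.mp hm with rfl | hm
      · simp only [Finset.mem_filter, Finset.mem_univ, true_and]
        refine ⟨?_, le_refl _⟩
        have := hj
        rw [Fin.lt_def] at this
        simp at this
        omega
      · simp only [Finset.mem_filter, Finset.mem_univ, true_and, Fin.le_def] at hm ⊢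
        simp at hm
        exact ⟨by omega, le_trans hm.2 (le_of_lt hlt)⟩
    have hcard := Finset.card_le_card hsub
    rw [Finset.card_insert_of_notMem hiT] at hcard
    have hRj : Rr π i j.val = Rr π i (j.val + 1) +
        (if π ⟨j.val, by omega⟩ ≤ π i then 1 else 0) := Rr_succ π i j.val (by omega)
    have hcast : (⟨j.val, by omega⟩ : Fin (n+1)) = j.castSucc := by
      rw [Fin.ext_iff]; simp
    rw [hcast, if_pos (le_of_lt hlt)] at hRj
    unfold Rr at h hRj
    unfold rankEnc at h
    omega

theorem rank_del_lt {π' : Equiv.Perm (Fin n)} (hdel : IsDeletion π i π') (j : Fin n)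
    (hj : j.castSucc < i) :
    rankEnc π j.castSucc = rankEnc π' j + (if π i < π j.castSucc then 1 else 0) := by
  classical
  have hsj : i.succAbove j = j.castSucc := Fin.succAbove_of_castSucc_lt i j hj
  have hrank := rank_del π i hdel j
  rw [hsj] at hrank
  set S := Finset.univ.filter
    (fun l : Fin n => j ≤ l ∧ π (i.succAbove l) ≤ π j.castSucc) with hS
  set T := Finset.univ.filter
    (fun m : Fin (n+1) => j.castSucc ≤ m ∧ π m ≤ π j.castSucc) with hT
  have himg : T.erase i = S.image i.succAbove := by
    ext m
    simp only [hT, hS, Finset.mem_erase, Finset.mem_filter, Finset.mem_univ, true_and,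
      Finset.mem_image]
    constructor
    · rintro ⟨hmi, h1, h2⟩
      obtain ⟨z, hz⟩ := Fin.exists_succAbove_eq hmi
      refine ⟨z, ⟨?_, by rw [hz]; exact h2⟩, hz⟩
      by_contra hzj
      push_neg at hzj
      have : i.succAbove z < i.succAbove j := Fin.succAbove_lt_succAbove_iff.mpr hzj
      rw [hz, hsj] at this
      exact absurd (lt_of_lt_of_le this h1) (lt_irrefl _)
    · rintro ⟨l, ⟨h1, h2⟩, rfl⟩
      refine ⟨Fin.succAbove_ne i l, ?_, h2⟩
      rw [← hsj]
      exact Fin.succAbove_le_succAbove_iff.mpr h1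
  have hScard : S.card = rankEnc π' j := hrank.symm
  have himgcard : (S.image i.succAbove).card = S.card :=
    Finset.card_image_of_injective S Fin.succAbove_right_injective
  have hne : i ≠ j.castSucc := ne_of_gt hj
  by_cases hiT : i ∈ T
  · have hcond : π i < π j.castSucc := by
      simp only [hT, Finset.mem_filter, Finset.mem_univ, true_and] at hiT
      exact lt_of_le_of_ne hiT.2 (fun hc => hne (π.injective hc))
    have h1 : (T.erase i).card = T.card - 1 := Finset.card_erase_of_mem hiT
    have h2 : 1 ≤ T.card := Finset.card_pos.mpr ⟨_, hiT⟩
    show T.card = _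
    rw [if_pos hcond, himg, himgcard] at *
    omega
  · have hcond : ¬ π i < π j.castSucc := by
      intro hc
      exact hiT (by
        simp only [hT, Finset.mem_filter, Finset.mem_univ, true_and]
        exact ⟨le_of_lt hj, le_of_lt hc⟩)
    have h1 : T = S.image i.succAbove := by
      rw [← himg]; exact (Finset.erase_eq_of_notMem hiT).symm
    show T.card = _
    rw [if_neg hcond, h1, himgcard]
    omega

/-- Main downward recursion: `delRev` computes the new prefix ranks. -/
theorem delRev_enc (m : ℕ) (hm : m ≤ i.val) :
    delRev (Rr π i m)
      ((List.ofFn fun t : Fin m =>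
        rankEnc π (Fin.castLE (le_of_lt (lt_of_le_of_lt hm i.isLt)) t)).reverse)
    = (List.ofFn fun t : Fin m =>
        rankEnc (delPerm π i) (Fin.castLE (le_trans hm (Nat.lt_succ_iff.mp i.isLt)) t)).reverse := by
  induction m with
  | zero => simp [delRev]
  | succ m ih =>
      have hm' : m ≤ i.val := by omega
      have hmn : m < n := by have := i.isLt; omega
      set jm : Fin n := ⟨m, hmn⟩ with hjm
      have hcastj : jm.castSucc = ⟨m, by omega⟩ := by rw [Fin.ext_iff]; simp [hjm]
      have hj : jm.castSucc < i := by rw [Fin.lt_def, hcastj]; simpa using hm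
      have hofn1 : (List.ofFn fun t : Fin (m+1) =>
          rankEnc π (Fin.castLE (le_of_lt (lt_of_le_of_lt hm i.isLt)) t))
          = (List.ofFn fun t : Fin m =>
              rankEnc π (Fin.castLE (le_of_lt (lt_of_le_of_lt hm' i.isLt)) t)).concat
            (rankEnc π jm.castSucc) := by
        rw [List.ofFn_succ']; rfl
      have hofn2 : (List.ofFn fun t : Fin (m+1) =>
          rankEnc (delPerm π i) (Fin.castLE (le_trans hm (Nat.lt_succ_iff.mp i.isLt)) t))
          = (List.ofFn fun t : Fin m =>
              rankEnc (delPerm π i)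
                (Fin.castLE (le_trans hm' (Nat.lt_succ_iff.mp i.isLt)) t)).concat
            (rankEnc (delPerm π i) jm) := by
        rw [List.ofFn_succ']; rfl
      rw [hofn1, hofn2]
      simp only [List.concat_eq_append, List.reverse_append, List.reverse_singleton,
        List.singleton_append]
      have hdel := rank_del_lt π i (isDeletion_delPerm π i) jm hj
      have hRm : Rr π i m = Rr π i (m+1) +
          (if π ⟨m, by omega⟩ ≤ π i then 1 else 0) := Rr_succ π i m (by omega)
      rw [show (⟨m, by omega⟩ : Fin (n+1)) = jm.castSucc from (by rw [Fin.ext_iff, hcastj])] at hRm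
      by_cases hcase : π i < π jm.castSucc
      · have hlt : Rr π i (m + 1) < rankEnc π jm.castSucc := (lt_iff_Rr π i jm hj).mp hcase
        simp only [delRev, if_pos hlt]
        have hle : ¬ π jm.castSucc ≤ π i := not_le.mpr hcase
        rw [if_neg hle, Nat.add_zero] at hRm
        rw [if_pos hcase] at hdel
        refine congrArg₂ List.cons (by omega) ?_
        rw [← hRm]
        exact ih hm'
      · have hnlt : ¬ Rr π i (m + 1) < rankEnc π jm.castSucc :=
          fun hc => hcase ((lt_iff_Rr π i jm hj).mpr hc)
        simp only [delRev, if_neg hnlt]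
        have hne : π jm.castSucc ≠ π i := fun hc =>
          absurd (π.injective hc ▸ hj) (lt_irrefl _)
        have hle : π jm.castSucc ≤ π i := le_of_lt (lt_of_le_of_ne (not_lt.mp hcase) hne)
        rw [if_pos hle] at hRm
        rw [if_neg hcase] at hdel
        refine congrArg₂ List.cons (by omega) ?_
        rw [← hRm]
        exact ih hm'

end S14h

namespace S14i
open S14 S14e S14g S14h

variable {n : ℕ} (π : Equiv.Perm (Fin (n + 1))) (i : Fin (n + 1))

theorem enc_length : (List.ofFn (rankEnc π)).length = n + 1 := List.length_ofFn

theorem take_enc : (List.ofFn (rankEnc π)).take i.val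
    = List.ofFn (fun t : Fin i.val =>
        rankEnc π (Fin.castLE (le_of_lt i.isLt) t)) := by
  apply List.ext_getElem
  · simp only [List.length_take, enc_length, List.length_ofFn]
    have := i.isLt; omega
  · intro t h1 h2
    rw [List.getElem_take, List.getElem_ofFn, List.getElem_ofFn]
    exact congrArg (rankEnc π) (by rw [Fin.ext_iff]; simp)

theorem get_enc (h : i.val < (List.ofFn (rankEnc π)).length) :
    (List.ofFn (rankEnc π))[i.val]'h = rankEnc π i := by
  rw [List.getElem_ofFn]

theorem enc'_eq : List.ofFn (rankEnc (delPerm π i))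
    = (List.ofFn fun t : Fin i.val =>
        rankEnc (delPerm π i) (Fin.castLE (Nat.lt_succ_iff.mp i.isLt) t))
      ++ (List.ofFn (rankEnc π)).drop (i.val + 1) := by
  apply List.ext_getElem
  · simp only [List.length_append, List.length_ofFn, List.length_drop, enc_length]
    have := i.isLt; omega
  · intro t h1 h2
    simp only [List.length_ofFn] at h1
    rcases lt_or_ge t i.val with ht | ht
    · rw [List.getElem_append_left (by simpa using ht), List.getElem_ofFn, List.getElem_ofFn]
      exact congrArg (rankEnc (delPerm π i)) (by rw [Fin.ext_iff]; simp)
    · rw [List.getElem_append_right (by simpa using ht)]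
      simp only [List.length_ofFn]
      rw [List.getElem_drop, List.getElem_ofFn, List.getElem_ofFn]
      have hjt : i ≤ (⟨t, h1⟩ : Fin n).castSucc := by
        rw [Fin.le_def]; simpa using ht
      have := rank_del_ge π i (isDeletion_delPerm π i) ⟨t, h1⟩ hjt
      calc rankEnc (delPerm π i) ⟨t, h1⟩ = rankEnc π (Fin.succ ⟨t, h1⟩) := this
      _ = _ := congrArg (rankEnc π) (by rw [Fin.ext_iff]; simp; omega)

/-- Core: the reversed encoding of the deletion, from any matching split. -/
theorem enc'_reverse_split (A : List ℕ) (aa : ℕ) (B : List ℕ)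
    (hsplit : (List.ofFn (rankEnc π)).reverse = A ++ aa :: B) (hB : B.length = i.val) :
    (List.ofFn (rankEnc (delPerm π i))).reverse = A ++ delRev aa B := by
  have henc : List.ofFn (rankEnc π) = B.reverse ++ aa :: A.reverse := by
    have := congrArg List.reverse hsplit
    simpa using this
  have hBrev : B.reverse = (List.ofFn (rankEnc π)).take i.val := by
    rw [henc]
    rw [show i.val = B.reverse.length by simp [hB]]
    rw [List.take_left]
  have haa : aa = rankEnc π i := by
    have h1 : i.val < (List.ofFn (rankEnc π)).length := by rw [enc_length]; exact i.isLt
    have h2 := List.getElem_of_eq henc h1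
    rw [get_enc π i h1] at h2
    rw [h2, List.getElem_append_right (by simp [hB])]
    simp [hB]
  have hArev : A.reverse = (List.ofFn (rankEnc π)).drop (i.val + 1) := by
    rw [henc, show (i.val + 1 : ℕ) = (B.reverse ++ [aa]).length by simp [hB],
      show B.reverse ++ aa :: A.reverse = (B.reverse ++ [aa]) ++ A.reverse by simp,
      List.drop_left]
  have hRr : Rr π i i.val = aa := by rw [Rr_ival]; exact haa.symm
  have hmain := delRev_enc π i i.val (le_refl _)
  rw [hRr] at hmain
  have hofn : (List.ofFn fun t : Fin i.val =>
      rankEnc π (Fin.castLE (le_of_lt i.isLt) t)).reverse = B := by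
    rw [← take_enc, ← hBrev]
    simp
  rw [hofn] at hmain
  -- hmain : delRev aa B = (prefix of enc').reverse
  have henc' := enc'_eq π i
  rw [henc', ← hArev]
  rw [List.reverse_append, List.reverse_reverse]
  congr 1
  rw [← hmain]

/-- The canonical split of the reversed encoding. -/
theorem exists_split :
    ∃ A aa B, (List.ofFn (rankEnc π)).reverse = A ++ aa :: B ∧ B.length = i.val
      ∧ aa = rankEnc π i := by
  have h1 : i.val < (List.ofFn (rankEnc π)).length := by rw [enc_length]; exact i.isLt
  refine ⟨((List.ofFn (rankEnc π)).drop (i.val + 1)).reverse, rankEnc π i,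
    ((List.ofFn (rankEnc π)).take i.val).reverse, ?_, by simp [enc_length], rfl⟩
  have : List.ofFn (rankEnc π) = (List.ofFn (rankEnc π)).take i.val
      ++ rankEnc π i :: (List.ofFn (rankEnc π)).drop (i.val + 1) := by
    rw [← get_enc π i h1, ← List.drop_eq_getElem_cons, List.take_append_drop]
  conv_lhs => rw [this]
  simp

/-- Any two deletions at the same position have the same encoding. -/
theorem enc_of_isDeletion {π' : Equiv.Perm (Fin n)} (hdel : IsDeletion π i π') :
    List.ofFn (rankEnc π') = List.ofFn (rankEnc (delPerm π i)) := by
  refine congrArg List.ofFn (funext fun j => ?_)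
  rw [rank_del π i hdel j, rank_del π i (isDeletion_delPerm π i) j]

end S14i


namespace S14j
open S14 S14e S14f S14g S14h S14i

theorem vk_iff_wrOk (k : ℕ) (p : List ℕ) : p ∈ Vk k ↔ WrOk k p.reverse := by
  constructor
  · intro hp t ht
    rw [List.length_reverse] at ht
    have hi : p.length - 1 - t < p.length := by omega
    have h := hp (p.length - 1 - t) hi
    rw [List.getElem_reverse]
    have : p.length - (p.length - 1 - t) = t + 1 := by omega
    unfold okL
    omega
  · intro hp i hi
    have ht : p.length - 1 - i < p.reverse.length := by rw [List.length_reverse]; omega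
    have h := hp (p.length - 1 - i) ht
    rw [List.getElem_reverse] at h
    have hidx : p.length - 1 - (p.length - 1 - i) = i := by omega
    unfold okL at h
    have hget : p[p.length - 1 - (p.length - 1 - i)]'(by omega) = p[i]'hi := by
      congr 1
    omega

theorem delRel_iff (k : ℕ) (p p' : List ℕ) :
    DelRel k p p' ↔ p ∈ Vk k ∧
      ∃ A aa B, p.reverse = A ++ aa :: B ∧ p'.reverse = A ++ delRev aa B := by
  constructor
  · rintro ⟨n, π, i, π', hb, hdel, rfl, rfl⟩
    refine ⟨enc_mem_Vk π hb, ?_⟩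
    obtain ⟨A, aa, B, hsplit, hB, -⟩ := exists_split π i
    refine ⟨A, aa, B, hsplit, ?_⟩
    rw [enc_of_isDeletion π i hdel]
    exact enc'_reverse_split π i A aa B hsplit hB
  · rintro ⟨hp, A, aa, B, hsplit, hsplit'⟩
    obtain ⟨n0, π, hb, rfl⟩ := decode _ hp
    have hlen : n0 = A.length + B.length + 1 := by
      have := congrArg List.length hsplit
      simp [enc_length] at this
      omega
    obtain ⟨n, rfl⟩ : ∃ n, n0 = n + 1 := ⟨A.length + B.length, by omega⟩
    have hBlt : B.length < n + 1 := by omega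
    set i : Fin (n + 1) := ⟨B.length, hBlt⟩ with hi
    have hcore := enc'_reverse_split π i A aa B hsplit rfl
    refine ⟨n, π, i, delPerm π i, hb, isDeletion_delPerm π i, rfl, ?_⟩
    have : (List.ofFn (rankEnc (delPerm π i))).reverse = p'.reverse := by
      rw [hcore, hsplit']
    have h2 := congrArg List.reverse this
    simpa using h2.symm

theorem bridge_TD (k : ℕ) {P : List ℕ} (hP : WrOk k P) (A : List ℕ) (aa : ℕ) (B : List ℕ)
    (h : P = A ++ aa :: B) : S14.TD k (S14c.capN k aa) B = delRev aa B := by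
  apply TD_eq_delRev
  intro x hx
  exact wrOk_letter_le hP (by rw [h]; simp [hx])

end S14j

namespace S14k
open S14 S14x S14c S14d S14e S14f S14g S14h S14i S14j

theorem main (k : ℕ) (L : Language ℕ) (hL : L ≤ EOmega k) (hreg : L.IsRegular) :
    Language.IsRegular {p' | ∃ p ∈ L, DelRel k p p'} ∧
    Language.IsRegular {p ∈ EOmega k | ∃ p', DelRel k p p' ∧ p' ∈ L} ∧
    Language.IsRegular {p ∈ EOmega k | ∀ p', DelRel k p p' → p' ∈ L} := by
  classical
  have hV : EOmega k = Vk k := eOmega_eq_Vk k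
  obtain ⟨σ, hσ, M, hM⟩ := isRegular_Rv hreg
  haveI := hσ
  refine ⟨?_, ?_, ?_⟩
  · -- statement 1
    have hset : {p' | ∃ p ∈ L, DelRel k p p'} = Rv ((nfa1 k (interDFA M (wrDFA k))).accepts) := by
      ext p'
      simp only [Set.mem_setOf_eq, mem_Rv, nfa1_accepts, interDFA_accepts, wrDFA_accepts, hM]
      constructor
      · rintro ⟨p, hpL, hrel⟩
        obtain ⟨hpV, A, aa, B, hsp, hsp'⟩ := (delRel_iff k p p').mp hrel
        have hwr : WrOk k (A ++ aa :: B) := by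
          rw [← hsp]; exact (vk_iff_wrOk k p).mp hpV
        refine ⟨A, aa, B, ?_, ?_, hwr⟩
        · rw [hsp', bridge_TD k hwr A aa B rfl]
        · show (A ++ aa :: B).reverse ∈ L
          rw [show (A ++ aa :: B).reverse = p from by rw [← hsp]; simp]
          exact hpL
      · rintro ⟨A, aa, B, hQ, hPL, hwr⟩
        refine ⟨(A ++ aa :: B).reverse, hPL, ?_⟩
        apply (delRel_iff k _ p').mpr
        refine ⟨(vk_iff_wrOk k _).mpr (by have hw : WrOk k (A ++ aa :: B) := hwr; simpa using hw), A, aa, B, by simp, ?_⟩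
        rw [hQ, bridge_TD k hwr A aa B rfl]
    rw [hset]
    exact isRegular_Rv (nfa_regular _)
  · -- statement 2
    have hset : {p ∈ EOmega k | ∃ p', DelRel k p p' ∧ p' ∈ L}
        = Rv {P | P ∈ ({P | WrOk k P} : Language ℕ) ∧ P ∈ (nfa2 k M).accepts} := by
      ext p
      simp only [Set.mem_setOf_eq, mem_Rv, nfa2_accepts, hM, hV]
      constructor
      · rintro ⟨hpV, p', hrel, hp'L⟩
        obtain ⟨-, A, aa, B, hsp, hsp'⟩ := (delRel_iff k p p').mp hrel
        have hwr : WrOk k p.reverse := (vk_iff_wrOk k p).mp hpV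
        refine ⟨hwr, A, aa, B, hsp, ?_⟩
        show (A ++ TD k (capN k aa) B).reverse ∈ L
        rw [bridge_TD k (by rw [← hsp]; exact hwr) A aa B rfl]
        rw [show (A ++ delRev aa B).reverse = p' from by rw [← hsp']; simp]
        exact hp'L
      · rintro ⟨hwr, A, aa, B, hsp, hPL⟩
        refine ⟨(vk_iff_wrOk k p).mpr hwr, (A ++ TD k (capN k aa) B).reverse, ?_, hPL⟩
        apply (delRel_iff k _ _).mpr
        refine ⟨(vk_iff_wrOk k p).mpr hwr, A, aa, B, hsp, ?_⟩
        rw [bridge_TD k (by rw [← hsp]; exact hwr) A aa B rfl]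
        simp [bridge_TD k (by rw [← hsp]; exact hwr) A aa B rfl]
    rw [hset]
    exact isRegular_Rv (isRegular_inter ⟨_, inferInstance, wrDFA k, wrDFA_accepts k⟩
      (nfa_regular _))
  · -- statement 3
    have hset : {p ∈ EOmega k | ∀ p', DelRel k p p' → p' ∈ L}
        = Rv {P | P ∈ ({P | WrOk k P} : Language ℕ) ∧
            P ∈ (((nfa2 k (complDFA M)).accepts)ᶜ : Language ℕ)} := by
      ext p
      simp only [Set.mem_setOf_eq, mem_Rv, Set.mem_compl_iff, nfa2_accepts, complDFA_accepts,
        hM, hV]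
      constructor
      · rintro ⟨hpV, hall⟩
        have hwr : WrOk k p.reverse := (vk_iff_wrOk k p).mp hpV
        refine ⟨hwr, ?_⟩
        rintro ⟨A, aa, B, hsp, hbad⟩
        have hTD := bridge_TD k (by rw [← hsp]; exact hwr) A aa B rfl
        have hrel : DelRel k p ((A ++ delRev aa B).reverse) := by
          apply (delRel_iff k _ _).mpr
          exact ⟨hpV, A, aa, B, hsp, by simp⟩
        have := hall _ hrel
        change ¬ _ at hbad
        apply hbad
        show (A ++ TD k (capN k aa) B).reverse ∈ L
        rw [hTD]
        exact this
      · rintro ⟨hwr, hno⟩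
        refine ⟨(vk_iff_wrOk k p).mpr hwr, ?_⟩
        intro p' hrel
        obtain ⟨-, A, aa, B, hsp, hsp'⟩ := (delRel_iff k p p').mp hrel
        have hTD := bridge_TD k (by rw [← hsp]; exact hwr) A aa B rfl
        by_contra hp'
        apply hno
        refine ⟨A, aa, B, hsp, ?_⟩
        change ¬ _
        show ¬ (A ++ TD k (capN k aa) B).reverse ∈ L
        rw [hTD, show (A ++ delRev aa B).reverse = p' from by rw [← hsp']; simp]
        exact hp'
    rw [hset]
    exact isRegular_Rv (isRegular_inter ⟨_, inferInstance, wrDFA k, wrDFA_accepts k⟩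
      (isRegular_compl (nfa_regular _)))

end S14k


/-- for regular `L ⊆ E(Ω_k)`, the set of all one-entry derivatives
`∂_i p` of words of `L`, the set of words some derivative of which lies in `L`,
and the set of words all of whose derivatives lie in `L`, are all regular. -/
theorem stmt14 (k : ℕ) (L : Language ℕ) (hL : L ≤ EOmega k) (hreg : L.IsRegular) :
    Language.IsRegular {p' | ∃ p ∈ L, DelRel k p p'} ∧
    Language.IsRegular {p ∈ EOmega k | ∃ p', DelRel k p p' ∧ p' ∈ L} ∧
    Language.IsRegular {p ∈ EOmega k | ∀ p', DelRel k p p' → p' ∈ L} := by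
  exact S14k.main k L hL hreg
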